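/- Fix ν ∈ ℝ∖ℤ and for each integer n set S_ν(n) = Σ_{k=0}^∞ q^{k(ν+k)+n(ν+2k)} (q^{2ν+2k+2};q²)_∞ / (q²;q²)_k, so that I_ν^{(3)}(2q^n;q²) = S_ν(n)/(q²;q²)_∞, where I_ν^{(3)}(2q^n;q²) denotes I_ν^{(3)}((1-q²)z;q²) at z = 2q^n/(1-q²). Then the ratio S_ν(n)/S_{-ν}(n) tends to 1 as n → -∞; equivalently, lim_{n→-∞} I_ν^{(3)}(2q^n;q²)/I_{-ν}^{(3)}(2q^n;q²) = 1. -/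

import Mathlib

open Real Filter

noncomputable section

/-- Finite q-Pochhammer symbol `(a;q)_n = ∏_{j=0}^{n-1} (1 - a q^j)`. -/
def qPoch (a q : ℝ) (n : ℕ) : ℝ := ∏ j ∈ Finset.range n, (1 - a * q ^ j)

/-- Infinite q-Pochhammer symbol `(a;q)_∞ = ∏_{j=0}^{∞} (1 - a q^j)`. -/
def qPochInf (a q : ℝ) : ℝ := ∏' j : ℕ, (1 - a * q ^ j)

/-- The q²-Gamma function `Γ_{q²}(x) = (q²;q²)_∞ (1-q²)^{1-x} / (q^{2x};q²)_∞`. -/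
def qGamma (q x : ℝ) : ℝ :=
  qPochInf (q ^ 2) (q ^ 2) * (1 - q ^ 2) ^ (1 - x) / qPochInf (q ^ (2 * x)) (q ^ 2)

/-- The reciprocal `1/Γ_{q²}(x)`, interpreted as `(q^{2x};q²)_∞ (1-q²)^{x-1} / (q²;q²)_∞`
(vanishing at nonpositive integers `x`). -/
def qGammaInv (q x : ℝ) : ℝ :=
  qPochInf (q ^ (2 * x)) (q ^ 2) * (1 - q ^ 2) ^ (x - 1) / qPochInf (q ^ 2) (q ^ 2)

/-- `δ(1) = 2`, `δ(2) = 0`, `δ(3) = 1`. -/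
def delta : ℕ → ℝ
  | 1 => 2
  | 2 => 0
  | 3 => 1
  | _ => 0

/-- The modified q-Bessel function of kind `j`: `Iq q j ν z = I_ν^{(j)}((1-q²)z; q²)`.
The extra power of `q` in the `k`-th term is `q^{(2-δ(j)) k (ν+k)}`, i.e. `1` for `j = 1`,
`q^{2k(ν+k)}` for `j = 2`, and `q^{k(ν+k)}` for `j = 3`. -/
def Iq (q : ℝ) (j : ℕ) (ν z : ℝ) : ℝ :=
  ∑' k : ℕ,
    q ^ ((2 - delta j) * k * (ν + k)) * (1 - q ^ 2) ^ k * (z / 2) ^ (ν + 2 * k)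
      / qPoch (q ^ 2) (q ^ 2) k * qGammaInv q (ν + k + 1)


/-- `S_ν(n) = Σ_{k≥0} q^{k(ν+k)+n(ν+2k)} (q^{2ν+2k+2};q²)_∞ / (q²;q²)_k`. -/
def Snu (q ν : ℝ) (n : ℤ) : ℝ :=
  ∑' k : ℕ, q ^ ((k : ℝ) * (ν + k) + (n : ℝ) * (ν + 2 * k))
      * qPochInf (q ^ (2 * ν + 2 * (k : ℝ) + 2)) (q ^ 2) / qPoch (q ^ 2) (q ^ 2) k


namespace Stmt19Aux

open Finset

lemma abs_log_le {y : ℝ} (hy : 2⁻¹ ≤ y) : |Real.log y| ≤ 2 * |y - 1| := by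
  rcases le_or_gt 1 y with h | h
  · rw [abs_of_nonneg (Real.log_nonneg h), abs_of_nonneg (by linarith)]
    have := Real.log_le_sub_one_of_pos (by linarith : (0:ℝ) < y)
    linarith
  · have hy0 : (0:ℝ) < y := by linarith
    rw [abs_of_nonpos (Real.log_nonpos hy0.le h.le), abs_of_nonpos (by linarith)]
    have h2 : Real.log y⁻¹ ≤ y⁻¹ - 1 := Real.log_le_sub_one_of_pos (by positivity)
    rw [Real.log_inv] at h2
    have h3 : y⁻¹ - 1 ≤ 2 * (1 - y) := by
      have hyy : y * y⁻¹ = 1 := mul_inv_cancel₀ hy0.ne'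
      nlinarith
    linarith

variable {r : ℝ}

lemma exists_tail (hr0 : 0 < r) (hr1 : r < 1) (x : ℝ) :
    ∃ N : ℕ, ∀ j : ℕ, |x| * r ^ (N + j) ≤ 2⁻¹ * r ^ j := by
  have h0 : Tendsto (fun N : ℕ => |x| * r ^ N) atTop (nhds 0) := by
    simpa using (tendsto_pow_atTop_nhds_zero_of_lt_one hr0.le hr1).const_mul |x|
  obtain ⟨N, hN⟩ := (h0.eventually (eventually_le_nhds (by norm_num : (0:ℝ) < 2⁻¹))).exists
  refine ⟨N, fun j => ?_⟩
  rw [pow_add, ← mul_assoc]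
  exact mul_le_mul_of_nonneg_right hN (pow_nonneg hr0.le j)

lemma tail_pos (hr0 : 0 < r) (hr1 : r < 1) {x : ℝ} {N : ℕ}
    (h : ∀ j : ℕ, |x| * r ^ (N + j) ≤ 2⁻¹ * r ^ j) (j : ℕ) :
    2⁻¹ ≤ 1 - x * r ^ (j + N) := by
  have h1 : |x * r ^ (j + N)| ≤ 2⁻¹ := by
    rw [abs_mul, abs_of_nonneg (pow_nonneg hr0.le _), add_comm j N]
    calc |x| * r ^ (N + j) ≤ 2⁻¹ * r ^ j := h j
      _ ≤ 2⁻¹ * 1 := by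
          exact mul_le_mul_of_nonneg_left (pow_le_one₀ hr0.le hr1.le) (by norm_num)
      _ = 2⁻¹ := mul_one _
  have := (abs_le.1 h1).2
  linarith

lemma tail_log_summable (hr0 : 0 < r) (hr1 : r < 1) {x : ℝ} {N : ℕ}
    (h : ∀ j : ℕ, |x| * r ^ (N + j) ≤ 2⁻¹ * r ^ j) :
    Summable fun j : ℕ => Real.log (1 - x * r ^ (j + N)) := by
  apply Summable.of_norm_bounded (g := fun j : ℕ => r ^ j)
    (summable_geometric_of_lt_one hr0.le hr1)
  intro j
  have h2 := tail_pos hr0 hr1 h j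
  calc ‖Real.log (1 - x * r ^ (j + N))‖ = |Real.log (1 - x * r ^ (j + N))| := rfl
    _ ≤ 2 * |(1 - x * r ^ (j + N)) - 1| := abs_log_le h2
    _ ≤ 2 * (2⁻¹ * r ^ j) := by
        apply mul_le_mul_of_nonneg_left _ (by norm_num)
        rw [show (1 - x * r ^ (j + N)) - 1 = -(x * r ^ (j + N)) by ring, abs_neg, abs_mul,
          abs_of_nonneg (pow_nonneg hr0.le _), add_comm j N]
        exact h j
    _ = r ^ j := by ring

lemma mult (hr0 : 0 < r) (hr1 : r < 1) (x : ℝ) :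
    Multipliable fun j : ℕ => 1 - x * r ^ j := by
  obtain ⟨N, hN⟩ := exists_tail hr0 hr1 x
  have hs := tail_log_summable hr0 hr1 hN
  exact Multipliable.comp_nat_add (k := N) ⟨_, (hs.hasSum.rexp).congr_fun fun j =>
    (Real.exp_log (lt_of_lt_of_le (by norm_num) (tail_pos hr0 hr1 hN j))).symm⟩

lemma tprod_pos (hr0 : 0 < r) (hr1 : r < 1) {x : ℝ}
    (hpos : ∀ j : ℕ, 0 < 1 - x * r ^ j) : 0 < ∏' j : ℕ, (1 - x * r ^ j) := by
  obtain ⟨N, hN⟩ := exists_tail hr0 hr1 x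
  have hs : Summable fun j : ℕ => Real.log (1 - x * r ^ j) :=
    (summable_nat_add_iff N).mp (tail_log_summable hr0 hr1 hN)
  have hp : HasProd (fun j : ℕ => 1 - x * r ^ j)
      (Real.exp (∑' j : ℕ, Real.log (1 - x * r ^ j))) :=
    (hs.hasSum.rexp).congr_fun fun j => (Real.exp_log (hpos j)).symm
  rw [hp.tprod_eq]
  exact Real.exp_pos _

lemma prod_one_sub_ge (a : ℕ → ℝ) (h0 : ∀ j, 0 ≤ a j) (h1 : ∀ j, a j ≤ 1) (m : ℕ) :
    1 - ∑ j ∈ range m, a j ≤ ∏ j ∈ range m, (1 - a j) := by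
  induction m with
  | zero => simp
  | succ m ih =>
    rw [prod_range_succ, sum_range_succ]
    have hprod0 : (0:ℝ) ≤ ∏ j ∈ range m, (1 - a j) :=
      prod_nonneg fun j _ => by linarith [h1 j]
    have hsum0 : (0:ℝ) ≤ ∑ j ∈ range m, a j := sum_nonneg fun j _ => h0 j
    nlinarith [mul_nonneg (sub_nonneg.2 ih) (sub_nonneg.2 (h1 m)),
      mul_nonneg hsum0 (h0 m), h0 m, h1 m]

lemma tprod_le_one' (hr0 : 0 < r) (hr1 : r < 1) {x : ℝ} (h0 : 0 ≤ x) (h1 : x ≤ 1) :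
    ∏' j : ℕ, (1 - x * r ^ j) ≤ 1 := by
  refine le_of_tendsto ((mult hr0 hr1 x).hasProd.tendsto_prod_nat)
    (Eventually.of_forall fun m => ?_)
  apply Finset.prod_le_one
  · intro j _
    have : x * r ^ j ≤ 1 :=
      le_trans (mul_le_of_le_one_right h0 (pow_le_one₀ hr0.le hr1.le)) h1
    linarith
  · intro j _
    have : 0 ≤ x * r ^ j := mul_nonneg h0 (pow_nonneg hr0.le j)
    linarith

lemma one_sub_div_le_tprod (hr0 : 0 < r) (hr1 : r < 1) {x : ℝ} (h0 : 0 ≤ x) (h1 : x ≤ 1) :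
    1 - x / (1 - r) ≤ ∏' j : ℕ, (1 - x * r ^ j) := by
  refine ge_of_tendsto ((mult hr0 hr1 x).hasProd.tendsto_prod_nat)
    (Eventually.of_forall fun m => ?_)
  have hr1' : (0:ℝ) < 1 - r := by linarith
  refine le_trans ?_ (prod_one_sub_ge (fun j => x * r ^ j)
    (fun j => mul_nonneg h0 (pow_nonneg hr0.le j))
    (fun j => le_trans (mul_le_of_le_one_right h0 (pow_le_one₀ hr0.le hr1.le)) h1) m)
  have hgs : ∑ j ∈ range m, x * r ^ j = x * ((1 - r ^ m) / (1 - r)) := by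
    rw [← mul_sum]
    congr 1
    have h := geom_sum_eq (by intro h; rw [h] at hr1; linarith : r ≠ 1) m
    rw [h, div_eq_div_iff (by linarith) (by linarith)]
    ring
  have hb : ∑ j ∈ range m, x * r ^ j ≤ x / (1 - r) := by
    rw [hgs]
    have h2 : (1 - r ^ m) / (1 - r) ≤ 1 / (1 - r) := by
      gcongr
      · linarith [pow_nonneg hr0.le m]
    calc x * ((1 - r ^ m) / (1 - r)) ≤ x * (1 / (1 - r)) :=
          mul_le_mul_of_nonneg_left h2 h0
      _ = x / (1 - r) := by ring
  linarith


lemma geom_sum_le' (hr0 : 0 < r) (hr1 : r < 1) (m : ℕ) :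
    ∑ j ∈ range m, r ^ j ≤ 1 / (1 - r) := by
  have h := geom_sum_eq (by intro h; rw [h] at hr1; linarith : r ≠ 1) m
  have h2 : (r ^ m - 1) / (r - 1) = (1 - r ^ m) / (1 - r) := by
    rw [div_eq_div_iff (by intro h'; rw [sub_eq_zero] at h'; exact absurd h'.symm (by intro h''; rw [h''] at hr1; linarith)) (by intro h'; linarith [sub_eq_zero.1 h'])]
    ring
  rw [h, h2]
  gcongr
  · linarith [pow_nonneg hr0.le m]

lemma abs_tprod_le (hr0 : 0 < r) (hr1 : r < 1) {x X : ℝ} (hx : |x| ≤ X) :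
    |∏' j : ℕ, (1 - x * r ^ j)| ≤ Real.exp (X / (1 - r)) := by
  refine le_of_tendsto ((mult hr0 hr1 x).hasProd.tendsto_prod_nat.abs)
    (Eventually.of_forall fun m => ?_)
  have hX0 : 0 ≤ X := le_trans (abs_nonneg x) hx
  calc |∏ j ∈ range m, (1 - x * r ^ j)| = ∏ j ∈ range m, |1 - x * r ^ j| :=
        Finset.abs_prod _ _
    _ ≤ ∏ j ∈ range m, Real.exp (X * r ^ j) := by
        apply Finset.prod_le_prod (fun j _ => abs_nonneg _) (fun j _ => ?_)
        have habs : |x * r ^ j| ≤ X * r ^ j := by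
          rw [abs_mul, abs_of_nonneg (pow_nonneg hr0.le j)]
          exact mul_le_mul_of_nonneg_right hx (pow_nonneg hr0.le j)
        have h2 := (abs_le.1 habs).1
        have h3 := (abs_le.1 habs).2
        have h1 : |1 - x * r ^ j| ≤ 1 + X * r ^ j := abs_le.2 ⟨by linarith, by linarith⟩
        exact le_trans h1 (by linarith [Real.add_one_le_exp (X * r ^ j)])
    _ = Real.exp (∑ j ∈ range m, X * r ^ j) := (Real.exp_sum _ _).symm
    _ ≤ Real.exp (X / (1 - r)) := by
        apply Real.exp_le_exp.2
        rw [← mul_sum]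
        calc X * ∑ j ∈ range m, r ^ j ≤ X * (1 / (1 - r)) :=
              mul_le_mul_of_nonneg_left (geom_sum_le' hr0 hr1 m) hX0
          _ = X / (1 - r) := by ring

lemma tprod_le_prod_range (hr0 : 0 < r) (hr1 : r < 1) {x : ℝ} (h0 : 0 ≤ x) (h1 : x ≤ 1)
    (k : ℕ) : ∏' j : ℕ, (1 - x * r ^ j) ≤ ∏ j ∈ range k, (1 - x * r ^ j) := by
  have hfac0 : ∀ j : ℕ, 0 ≤ 1 - x * r ^ j := fun j => by
    have : x * r ^ j ≤ 1 :=
      le_trans (mul_le_of_le_one_right h0 (pow_le_one₀ hr0.le hr1.le)) h1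
    linarith
  have hfac1 : ∀ j : ℕ, 1 - x * r ^ j ≤ 1 := fun j => by
    have : 0 ≤ x * r ^ j := mul_nonneg h0 (pow_nonneg hr0.le j)
    linarith
  refine le_of_tendsto ((mult hr0 hr1 x).hasProd.tendsto_prod_nat) ?_
  filter_upwards [eventually_ge_atTop k] with m hm
  rw [← prod_range_mul_prod_Ico _ hm]
  calc (∏ j ∈ range k, (1 - x * r ^ j)) * ∏ j ∈ Ico k m, (1 - x * r ^ j)
      ≤ (∏ j ∈ range k, (1 - x * r ^ j)) * 1 := by
        apply mul_le_mul_of_nonneg_left _ (prod_nonneg fun j _ => hfac0 j)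
        exact Finset.prod_le_one (fun j _ => hfac0 j) (fun j _ => hfac1 j)
    _ = ∏ j ∈ range k, (1 - x * r ^ j) := mul_one _

lemma tprod_tendsto_one (hr0 : 0 < r) (hr1 : r < 1) {x : ℕ → ℝ} (hx0 : ∀ k, 0 ≤ x k)
    (hx : Tendsto x atTop (nhds 0)) :
    Tendsto (fun k => ∏' j : ℕ, (1 - x k * r ^ j)) atTop (nhds 1) := by
  have hlow : Tendsto (fun k => 1 - x k / (1 - r)) atTop (nhds 1) := by
    have := (hx.div_const (1 - r)).const_sub 1
    simpa using this
  have hev : ∀ᶠ k in atTop, x k ≤ 1 :=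
    hx.eventually (eventually_le_nhds (by norm_num : (0:ℝ) < 1)) |>.mono
      (fun k hk => le_trans hk (by norm_num))
  refine tendsto_of_tendsto_of_tendsto_of_le_of_le' hlow tendsto_const_nhds ?_ ?_
  · filter_upwards [hev] with k hk
    exact one_sub_div_le_tprod hr0 hr1 (hx0 k) hk
  · filter_upwards [hev] with k hk
    exact tprod_le_one' hr0 hr1 (hx0 k) hk

lemma theta_nat_summable {q : ℝ} (hq0 : 0 < q) (hq1 : q < 1) (ν : ℝ) :
    Summable fun k : ℕ => q ^ ((k : ℝ) * ((k : ℝ) + ν)) := by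
  obtain ⟨N, hN⟩ := exists_nat_ge (1 - ν)
  rw [← summable_nat_add_iff N]
  apply Summable.of_nonneg_of_le (fun k => (Real.rpow_pos_of_pos hq0 _).le) (fun k => ?_)
    (summable_geometric_of_lt_one hq0.le hq1)
  rw [show q ^ k = q ^ ((k : ℝ)) from (Real.rpow_natCast q k).symm]
  apply Real.rpow_le_rpow_of_exponent_ge hq0 hq1.le
  push_cast
  nlinarith [Nat.cast_nonneg (α := ℝ) k, Nat.cast_nonneg (α := ℝ) N]

end Stmt19Aux

namespace Stmt19Aux

/-- `c_k = (q^{2ν+2k+2};q²)_∞ / (q²;q²)_k`. -/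
def cAux (q ν : ℝ) (k : ℕ) : ℝ :=
  qPochInf (q ^ (2 * ν + 2 * (k : ℝ) + 2)) (q ^ 2) / qPoch (q ^ 2) (q ^ 2) k

/-- `F n j = q^{j(j+ν)} c_{(j-n)}` for `j ≥ n`, else `0`. -/
def FAux (q ν : ℝ) (n j : ℤ) : ℝ :=
  if n ≤ j then q ^ ((j : ℝ) * ((j : ℝ) + ν)) * cAux q ν (j - n).toNat else 0

variable {q : ℝ}

lemma hr1' (hq0 : 0 < q) (hq1 : q < 1) : q ^ 2 < 1 := by nlinarith

lemma qq_pos (hq0 : 0 < q) (hq1 : q < 1) : 0 < qPochInf (q ^ 2) (q ^ 2) := by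
  have hr0 : (0:ℝ) < q ^ 2 := by positivity
  exact tprod_pos hr0 (hr1' hq0 hq1) (fun j => by
    have h1 : q ^ 2 * (q ^ 2) ^ j ≤ q ^ 2 * 1 :=
      mul_le_mul_of_nonneg_left (pow_le_one₀ hr0.le (hr1' hq0 hq1).le) hr0.le
    nlinarith)

lemma qPoch_pos (hq0 : 0 < q) (hq1 : q < 1) (k : ℕ) : 0 < qPoch (q ^ 2) (q ^ 2) k := by
  have hr0 : (0:ℝ) < q ^ 2 := by positivity
  refine Finset.prod_pos fun j _ => ?_
  have h1 : q ^ 2 * (q ^ 2) ^ j ≤ q ^ 2 * 1 :=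
    mul_le_mul_of_nonneg_left (pow_le_one₀ hr0.le (hr1' hq0 hq1).le) hr0.le
  nlinarith [hr1' hq0 hq1]

lemma qPoch_ge (hq0 : 0 < q) (hq1 : q < 1) (k : ℕ) :
    qPochInf (q ^ 2) (q ^ 2) ≤ qPoch (q ^ 2) (q ^ 2) k := by
  have hr0 : (0:ℝ) < q ^ 2 := by positivity
  exact tprod_le_prod_range hr0 (hr1' hq0 hq1) hr0.le (hr1' hq0 hq1).le k

lemma cAux_bound (hq0 : 0 < q) (hq1 : q < 1) (ν : ℝ) (k : ℕ) :
    |cAux q ν k| ≤ Real.exp (q ^ (2 * ν + 2) / (1 - q ^ 2)) / qPochInf (q ^ 2) (q ^ 2) := by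
  have hr0 : (0:ℝ) < q ^ 2 := by positivity
  have hr1 := hr1' hq0 hq1
  have hxk : |q ^ (2 * ν + 2 * (k : ℝ) + 2)| ≤ q ^ (2 * ν + 2) := by
    rw [abs_of_pos (Real.rpow_pos_of_pos hq0 _)]
    apply Real.rpow_le_rpow_of_exponent_ge hq0 hq1.le
    have : (0:ℝ) ≤ (k : ℝ) := Nat.cast_nonneg k
    linarith
  have hnum := abs_tprod_le hr0 hr1 hxk
  rw [cAux, abs_div, abs_of_pos (qPoch_pos hq0 hq1 k)]
  exact div_le_div₀ (Real.exp_nonneg _) hnum (qq_pos hq0 hq1) (qPoch_ge hq0 hq1 k)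

lemma cAux_tendsto (hq0 : 0 < q) (hq1 : q < 1) (ν : ℝ) :
    Tendsto (cAux q ν) atTop (nhds (qPochInf (q ^ 2) (q ^ 2))⁻¹) := by
  have hr0 : (0:ℝ) < q ^ 2 := by positivity
  have hr1 := hr1' hq0 hq1
  have hx0 : Tendsto (fun k : ℕ => q ^ (2 * ν + 2 * (k : ℝ) + 2)) atTop (nhds 0) := by
    have heq : ∀ k : ℕ, q ^ (2 * ν + 2 * (k : ℝ) + 2) = q ^ (2 * ν + 2) * (q ^ 2) ^ k := by
      intro k
      rw [← Real.rpow_natCast (q ^ 2) k, ← Real.rpow_natCast q 2, ← Real.rpow_mul hq0.le,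
        ← Real.rpow_add hq0]
      norm_num
      ring_nf
    have := (tendsto_pow_atTop_nhds_zero_of_lt_one hr0.le hr1).const_mul (q ^ (2 * ν + 2))
    rw [mul_zero] at this
    exact this.congr fun k => (heq k).symm
  have hnum : Tendsto (fun k : ℕ => qPochInf (q ^ (2 * ν + 2 * (k : ℝ) + 2)) (q ^ 2)) atTop
      (nhds 1) :=
    tprod_tendsto_one hr0 hr1 (fun k => (Real.rpow_pos_of_pos hq0 _).le) hx0
  have hden : Tendsto (fun k : ℕ => qPoch (q ^ 2) (q ^ 2) k) atTop
      (nhds (qPochInf (q ^ 2) (q ^ 2))) :=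
    (mult hr0 hr1 (q ^ 2)).hasProd.tendsto_prod_nat
  have := hnum.div hden (qq_pos hq0 hq1).ne'
  rw [one_div] at this
  exact this

lemma theta_int_summable (hq0 : 0 < q) (hq1 : q < 1) (ν M : ℝ) :
    Summable fun j : ℤ => q ^ ((j : ℝ) * ((j : ℝ) + ν)) * M := by
  apply Summable.of_nat_of_neg
  · apply ((theta_nat_summable hq0 hq1 ν).mul_right M).congr
    intro k
    norm_num
  · apply ((theta_nat_summable hq0 hq1 (-ν)).mul_right M).congr
    intro k
    push_cast
    congr 2
    ring

lemma snu_eq (hq0 : 0 < q) (hq1 : q < 1) (ν : ℝ) (n : ℤ) :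
    q ^ ((n : ℝ) ^ 2) * Snu q ν n = ∑' j : ℤ, FAux q ν n j := by
  have h1 : q ^ ((n : ℝ) ^ 2) * Snu q ν n
      = ∑' k : ℕ, q ^ ((n : ℝ) ^ 2) * (q ^ ((k : ℝ) * (ν + k) + (n : ℝ) * (ν + 2 * k))
        * qPochInf (q ^ (2 * ν + 2 * (k : ℝ) + 2)) (q ^ 2) / qPoch (q ^ 2) (q ^ 2) k) := by
    rw [Snu, ← tsum_mul_left]
  rw [h1]
  have hinj : Function.Injective (fun k : ℕ => n + (k : ℤ)) := fun a b h => by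
    simpa using h
  rw [← Function.Injective.tsum_eq hinj (f := FAux q ν n) ?side]
  · apply tsum_congr
    intro k
    have hk : n ≤ n + (k : ℤ) := by omega
    have htn : (n + (k : ℤ) - n).toNat = k := by omega
    simp only [FAux, if_pos hk, htn]
    rw [mul_div_assoc, ← mul_assoc, ← Real.rpow_add hq0, cAux]
    push_cast
    ring_nf
  · intro j hj
    rw [Function.mem_support, FAux] at hj
    by_cases h : n ≤ j
    · exact ⟨(j - n).toNat, by simp; omega⟩
    · simp [if_neg h] at hj

lemma key (hq0 : 0 < q) (hq1 : q < 1) (ν : ℝ) :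
    Tendsto (fun n : ℤ => q ^ ((n : ℝ) ^ 2) * Snu q ν n) atBot
      (nhds (∑' j : ℤ, q ^ ((j : ℝ) * ((j : ℝ) + ν)) * (qPochInf (q ^ 2) (q ^ 2))⁻¹)) := by
  have hM0 : 0 < Real.exp (q ^ (2 * ν + 2) / (1 - q ^ 2)) / qPochInf (q ^ 2) (q ^ 2) :=
    div_pos (Real.exp_pos _) (qq_pos hq0 hq1)
  have hDCT := tendsto_tsum_of_dominated_convergence (𝓕 := (atBot : Filter ℤ))
    (f := fun n j => FAux q ν n j)
    (g := fun j : ℤ => q ^ ((j : ℝ) * ((j : ℝ) + ν)) * (qPochInf (q ^ 2) (q ^ 2))⁻¹)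
    (bound := fun j : ℤ => q ^ ((j : ℝ) * ((j : ℝ) + ν))
      * (Real.exp (q ^ (2 * ν + 2) / (1 - q ^ 2)) / qPochInf (q ^ 2) (q ^ 2)))
    (theta_int_summable hq0 hq1 ν _) ?conv ?bdd
  · exact hDCT.congr fun n => (snu_eq hq0 hq1 ν n).symm
  case conv =>
    intro j
    have ht : Tendsto (fun n : ℤ => (j - n).toNat) atBot atTop := by
      rw [tendsto_atTop]
      intro b
      filter_upwards [eventually_le_atBot (j - (b : ℤ))] with n hn
      omega
    have hc : Tendsto (fun n : ℤ => cAux q ν (j - n).toNat) atBot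
        (nhds (qPochInf (q ^ 2) (q ^ 2))⁻¹) := (cAux_tendsto hq0 hq1 ν).comp ht
    have := hc.const_mul (q ^ ((j : ℝ) * ((j : ℝ) + ν)))
    apply this.congr'
    filter_upwards [eventually_le_atBot j] with n hn
    simp only [FAux, if_pos hn]
  case bdd =>
    apply Eventually.of_forall
    intro n j
    simp only [FAux]
    by_cases h : n ≤ j
    · rw [if_pos h]
      rw [Real.norm_eq_abs, abs_mul, abs_of_pos (Real.rpow_pos_of_pos hq0 _)]
      exact mul_le_mul_of_nonneg_left (cAux_bound hq0 hq1 ν _)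
        (Real.rpow_pos_of_pos hq0 _).le
    · rw [if_neg h, norm_zero]
      exact mul_nonneg (Real.rpow_pos_of_pos hq0 _).le hM0.le

end Stmt19Aux

open Stmt19Aux

/-- `I_ν^{(3)}(2q^n;q²) = S_ν(n)/(q²;q²)_∞` and
`S_ν(n)/S_{-ν}(n) → 1` as `n → -∞`, i.e. `I_ν^{(3)}(2q^n)/I_{-ν}^{(3)}(2q^n) → 1`. -/
theorem stmt19 (q ν : ℝ) (hq0 : 0 < q) (hq1 : q < 1) (hν : ∀ n : ℤ, ν ≠ n) :
    (∀ n : ℤ, Iq q 3 ν (2 * q ^ (n : ℝ) / (1 - q ^ 2))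
        = Snu q ν n / qPochInf (q ^ 2) (q ^ 2))
  ∧ Filter.Tendsto (fun n : ℤ => Snu q ν n / Snu q (-ν) n) Filter.atBot (nhds 1) := by
  have hA : (0:ℝ) < 1 - q ^ 2 := by nlinarith
  have hP : 0 < qPochInf (q ^ 2) (q ^ 2) := qq_pos hq0 hq1
  constructor
  · intro n
    rw [Iq, Snu]
    conv_rhs => rw [div_eq_mul_inv, ← tsum_mul_right]
    apply tsum_congr
    intro k
    rw [qGammaInv]
    rw [show (2 - delta 3) * (k : ℝ) * (ν + k) = (k : ℝ) * (ν + k) by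
      norm_num [delta]]
    rw [show 2 * q ^ (n : ℝ) / (1 - q ^ 2) / 2 = q ^ (n : ℝ) / (1 - q ^ 2) by ring]
    rw [Real.div_rpow (Real.rpow_pos_of_pos hq0 _).le hA.le]
    rw [← Real.rpow_mul hq0.le]
    rw [show 2 * (ν + (k : ℝ) + 1) = 2 * ν + 2 * (k : ℝ) + 2 by ring]
    rw [show ν + (k : ℝ) + 1 - 1 = ν + (k : ℝ) by ring]
    rw [Real.rpow_add hq0 ((k : ℝ) * (ν + k)) ((n : ℝ) * (ν + 2 * k))]
    have hAc : (1 - q ^ 2) ^ (ν + 2 * (k : ℝ))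
        = (1 - q ^ 2) ^ k * (1 - q ^ 2) ^ (ν + (k : ℝ)) := by
      rw [← Real.rpow_natCast (1 - q ^ 2) k, ← Real.rpow_add hA]
      congr 1
      ring
    rw [hAc]
    have h1 : ((1 - q ^ 2) ^ k : ℝ) ≠ 0 := by positivity
    have h2 : (1 - q ^ 2) ^ (ν + (k : ℝ)) ≠ 0 := (Real.rpow_pos_of_pos hA _).ne'
    have h3 : qPoch (q ^ 2) (q ^ 2) k ≠ 0 := (qPoch_pos hq0 hq1 k).ne'
    field_simp
  · have hk1 := key hq0 hq1 ν
    have hk2 := key hq0 hq1 (-ν)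
    have hLeq : (∑' j : ℤ, q ^ ((j : ℝ) * ((j : ℝ) + ν)) * (qPochInf (q ^ 2) (q ^ 2))⁻¹)
        = ∑' j : ℤ, q ^ ((j : ℝ) * ((j : ℝ) + (-ν))) * (qPochInf (q ^ 2) (q ^ 2))⁻¹ := by
      rw [← (Equiv.neg ℤ).tsum_eq
        (fun j : ℤ => q ^ ((j : ℝ) * ((j : ℝ) + (-ν))) * (qPochInf (q ^ 2) (q ^ 2))⁻¹)]
      apply tsum_congr
      intro j
      simp only [Equiv.neg_apply]
      congr 2
      push_cast
      ring
    have hLpos : 0 < ∑' j : ℤ, q ^ ((j : ℝ) * ((j : ℝ) + (-ν))) * (qPochInf (q ^ 2) (q ^ 2))⁻¹ := by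
      apply Summable.tsum_pos (theta_int_summable hq0 hq1 (-ν) _)
        (fun j => mul_nonneg (Real.rpow_pos_of_pos hq0 _).le (inv_nonneg.2 hP.le)) 0
      exact mul_pos (Real.rpow_pos_of_pos hq0 _) (inv_pos.2 hP)
    have hdiv := hk1.div hk2 hLpos.ne'
    rw [hLeq, div_self hLpos.ne'] at hdiv
    apply hdiv.congr
    intro n
    exact mul_div_mul_left _ _ (Real.rpow_pos_of_pos hq0 _).ne'


end
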